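/- arXiv:1311.0989 — 2 statements merged into one kernel-verified Lean document; each statement's English description precedes it below -/
import Mathlib

section
/- Consider minimizing F(w) = ½wᵀw + (2λ₁/m²)(m·wᵀXXᵀw − wᵀXy yᵀXᵀw) − (λ₂/m)(Xy)ᵀw over w ∈ ℝ^d subject to constraints y_i·(Xᵀw)_i ≥ 1 − ξ_i that depend on w only through Xᵀw, where λ₁ ≥ 0. Then any minimizer w* lies in the column span of X, i.e., w* = Xα for some α ∈ ℝ^m (Representer theorem for LDM). -/
/-! The objective is `½ wᵀw` plus a function of `Xᵀw`, and the feasible set is cut out by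
conditions on `Xᵀw`. Solving the normal equations `XᵀXα = Xᵀw` splits `w = Xα + v` with
`Xᵀv = 0`; then `Xα` is feasible, has the same value of every term except `½ wᵀw`, and
`wᵀw = (Xα)ᵀ(Xα) + vᵀv`. Minimality forces `vᵀv ≤ 0`, so `v = 0`. -/

open Matrix

namespace Matrix

variable {m n R : Type*} [Fintype m] [Fintype n]

theorem dotProduct_mulVec_mul_transpose [CommSemiring R] (A : Matrix m n R) (w : m → R) :
    w ⬝ᵥ (A * Aᵀ) *ᵥ w = Aᵀ *ᵥ w ⬝ᵥ Aᵀ *ᵥ w := by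
  rw [← mulVec_mulVec, ← dotProduct_transpose_mulVec]

variable [Field R] [LinearOrder R] [IsStrictOrderedRing R]

theorem range_mulVecLin_transpose_mul_self (A : Matrix m n R) :
    LinearMap.range (Aᵀ * A).mulVecLin = LinearMap.range Aᵀ.mulVecLin := by
  refine Submodule.eq_of_le_of_finrank_eq ?_ ?_
  · rw [mulVecLin_mul]
    exact LinearMap.range_comp_le_range _ _
  · rw [← rank, ← rank, rank_transpose_mul_self, rank_transpose]

theorem exists_transpose_mulVec_sub_mulVec_eq_zero (A : Matrix m n R) (w : m → R) :
    ∃ α, Aᵀ *ᵥ (w - A *ᵥ α) = 0 := by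
  obtain ⟨α, hα⟩ : Aᵀ *ᵥ w ∈ LinearMap.range (Aᵀ * A).mulVecLin := by
    rw [range_mulVecLin_transpose_mul_self]
    exact LinearMap.mem_range_self _ w
  refine ⟨α, ?_⟩
  rw [mulVec_sub, mulVec_mulVec, ← mulVecLin_apply (Aᵀ * A), hα, sub_self]

theorem exists_eq_mulVec_of_isMinOn (A : Matrix m n R) (G : (n → R) → R) {S : Set (m → R)}
    (hS : ∀ w ∈ S, ∀ w', Aᵀ *ᵥ w' = Aᵀ *ᵥ w → w' ∈ S) {w : m → R} (hw : w ∈ S)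
    (hmin : IsMinOn (fun w ↦ w ⬝ᵥ w / 2 + G (Aᵀ *ᵥ w)) S w) :
    ∃ α, w = A *ᵥ α := by
  obtain ⟨α, hv⟩ := A.exists_transpose_mulVec_sub_mulVec_eq_zero w
  set v := w - A *ᵥ α
  have hw_eq : w = A *ᵥ α + v := (add_sub_cancel _ _).symm
  have hAα : Aᵀ *ᵥ (A *ᵥ α) = Aᵀ *ᵥ w := by
    rw [hw_eq, mulVec_add, hv, add_zero]
  have hpyth : w ⬝ᵥ w = A *ᵥ α ⬝ᵥ A *ᵥ α + v ⬝ᵥ v := by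
    have horth : A *ᵥ α ⬝ᵥ v = 0 := by
      rw [dotProduct_comm, ← dotProduct_transpose_mulVec, hv, dotProduct_zero]
    rw [hw_eq, add_dotProduct, dotProduct_add, dotProduct_add, horth, dotProduct_comm v, horth]
    ring
  have hle : w ⬝ᵥ w / 2 + G (Aᵀ *ᵥ w) ≤ A *ᵥ α ⬝ᵥ A *ᵥ α / 2 + G (Aᵀ *ᵥ (A *ᵥ α)) :=
    hmin (hS w hw _ hAα)
  rw [hAα, hpyth] at hle
  have hv0 : v = 0 :=
    dotProduct_self_eq_zero.1
      (le_antisymm (by linarith) (Finset.sum_nonneg fun i _ ↦ mul_self_nonneg (v i)))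
  exact ⟨α, by rw [hw_eq, hv0, add_zero]⟩

end Matrix

theorem stmt_1_general (d m : ℕ) (X : Matrix (Fin d) (Fin m) ℝ)
    (y ξ : Fin m → ℝ)
    (lam₁ lam₂ : ℝ)
    (F : (Fin d → ℝ) → ℝ)
    (hF : ∀ w, F w = (1/2) * (w ⬝ᵥ w)
        + (2 * lam₁ / (m : ℝ)^2) * ((m : ℝ) * (w ⬝ᵥ (X * X.transpose).mulVec w)
            - (X.mulVec y ⬝ᵥ w)^2)
        - (lam₂ / (m : ℝ)) * (X.mulVec y ⬝ᵥ w))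
    (S : Set (Fin d → ℝ))
    (hS : S = {w | ∀ i, y i * (X.transpose.mulVec w) i ≥ 1 - ξ i})
    (wstar : Fin d → ℝ) (hwstar : wstar ∈ S) (hmin : ∀ w ∈ S, F wstar ≤ F w) :
    ∃ α : Fin m → ℝ, wstar = X.mulVec α := by
  have hFG : ∀ w, F w = w ⬝ᵥ w / 2 + (2 * lam₁ / (m : ℝ) ^ 2 *
      ((m : ℝ) * (Xᵀ *ᵥ w ⬝ᵥ Xᵀ *ᵥ w) - (y ⬝ᵥ Xᵀ *ᵥ w) ^ 2) - lam₂ / (m : ℝ) * (y ⬝ᵥ Xᵀ *ᵥ w)) := by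
    intro w
    rw [hF, dotProduct_mulVec_mul_transpose, dotProduct_comm (X *ᵥ y),
      ← dotProduct_transpose_mulVec X y w]
    ring
  refine X.exists_eq_mulVec_of_isMinOn (fun z ↦ 2 * lam₁ / (m : ℝ) ^ 2 *
      ((m : ℝ) * (z ⬝ᵥ z) - (y ⬝ᵥ z) ^ 2) - lam₂ / (m : ℝ) * (y ⬝ᵥ z)) ?_ hwstar ?_
  · subst hS
    intro w hw w' hw'
    simpa only [Set.mem_ofPred_eq, hw'] using hw
  · intro w hw
    simpa only [Set.mem_ofPred_eq, ← hFG] using hmin w hw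

theorem stmt_1 (d m : ℕ) (hm : 0 < m) (X : Matrix (Fin d) (Fin m) ℝ)
    (y ξ : Fin m → ℝ) (hy : ∀ i, y i = 1 ∨ y i = -1)
    (lam₁ lam₂ : ℝ) (hlam₁ : 0 ≤ lam₁)
    (F : (Fin d → ℝ) → ℝ)
    (hF : ∀ w, F w = (1/2) * (w ⬝ᵥ w)
        + (2 * lam₁ / (m : ℝ)^2) * ((m : ℝ) * (w ⬝ᵥ (X * X.transpose).mulVec w)
            - (X.mulVec y ⬝ᵥ w)^2)
        - (lam₂ / (m : ℝ)) * (X.mulVec y ⬝ᵥ w))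
    (S : Set (Fin d → ℝ))
    (hS : S = {w | ∀ i, y i * (X.transpose.mulVec w) i ≥ 1 - ξ i})
    (wstar : Fin d → ℝ) (hwstar : wstar ∈ S) (hmin : ∀ w ∈ S, F wstar ≤ F w) :
    ∃ α : Fin m → ℝ, wstar = X.mulVec α :=
  stmt_1_general d m X y ξ lam₁ lam₂ F hF S hS wstar hwstar hmin
end

section
/- Combining the two previous computations: if α* minimizes f(α) = ½αᵀHα + cᵀα over [0,C]^m with 0 < αᵢ* < C (so (Hα*+c)ᵢ = 0), and αⁱ minimizes f over [0,C]^m ∩ {αᵢ = 0}, and Hᵢᵢ > 0, then ((Hαⁱ + c)ᵢ)² ≤ (αᵢ*)²·Hᵢᵢ². In the LDM setting with c = (λ₂/m)He − e and (Hαⁱ + c)ᵢ related to 1 − yᵢxᵢᵀwⁱ, this yields (1 − yᵢxᵢᵀwⁱ)² ≤ (αᵢ*)²Hᵢᵢ², and if additionally yᵢxᵢᵀwⁱ < 0, then 1 ≤ αᵢ*·Hᵢᵢ. -/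
/-! With `Hx + c` the gradient of `f`, optimality of `α*` in its interior coordinate `i` gives
`(Hα* + c)ᵢ = 0`. Moving `α*` to the face `αᵢ = 0` and `αⁱ` off it to `αᵢ = αᵢ*` changes `f` by
`αᵢ*² Hᵢᵢ / 2` and `αᵢ* (Hαⁱ + c)ᵢ + αᵢ*² Hᵢᵢ / 2` respectively; minimality of both points makes
the sum nonnegative, so `(Hαⁱ + c)ᵢ ≥ -αᵢ* Hᵢᵢ`. Monotonicity of the gradient,
`⟨H(α* - αⁱ), α* - αⁱ⟩ ≥ 0`, together with the variational inequalities of both minimizers gives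
`αᵢ* (Hαⁱ + c)ᵢ ≤ 0`. Hence `|(Hαⁱ + c)ᵢ| ≤ αᵢ* Hᵢᵢ`. -/

open Matrix

open Filter Topology in
theorem nonneg_of_forall_mul_add_sq_mul_nonneg {D Q : ℝ}
    (h : ∀ t ∈ Set.Ioc (0 : ℝ) 1, 0 ≤ t * D + t ^ 2 * Q) : 0 ≤ D := by
  have hcont : Continuous fun t : ℝ => D + t * Q := by fun_prop
  have hlim : Tendsto (fun t : ℝ => D + t * Q) (𝓝[>] 0) (𝓝 D) :=
    tendsto_nhdsWithin_of_tendsto_nhds (by simpa using hcont.tendsto 0)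
  refine ge_of_tendsto hlim ?_
  filter_upwards [Ioc_mem_nhdsGT one_pos] with t ht
  have hsum := h t ht
  rw [show t * D + t ^ 2 * Q = t * (D + t * Q) by ring] at hsum
  exact nonneg_of_mul_nonneg_right hsum ht.1

theorem Function.update_eq_self_add_single {ι G : Type*} [DecidableEq ι] [AddCommGroup G]
    (x : ι → G) (i : ι) (a : G) :
    Function.update x i a = x + Pi.single i (a - x i) := by
  ext j
  rcases eq_or_ne j i with rfl | hj <;> simp [*]

theorem Function.update_mem_Icc {ι : Type*} [DecidableEq ι] {α : ι → Type*}
    [∀ j, Preorder (α j)] {l u x : ∀ j, α j} (hx : x ∈ Set.Icc l u) {i : ι} {a : α i}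
    (ha : a ∈ Set.Icc (l i) (u i)) : Function.update x i a ∈ Set.Icc l u :=
  ⟨le_update_iff.2 ⟨ha.1, fun j _ => hx.1 j⟩, update_le_iff.2 ⟨ha.2, fun j _ => hx.2 j⟩⟩

section

variable {ι : Type*} [Fintype ι] (H : Matrix ι ι ℝ) (c : ι → ℝ)

noncomputable def quadObjective (x : ι → ℝ) : ℝ := 1 / 2 * (x ⬝ᵥ H *ᵥ x) + c ⬝ᵥ x

variable {H c}

theorem quadObjective_add (hH : H.IsSymm) (x v : ι → ℝ) :
    quadObjective H c (x + v) =
      quadObjective H c x + (H *ᵥ x + c) ⬝ᵥ v + 1 / 2 * (v ⬝ᵥ H *ᵥ v) := by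
  have hvecMul : x ᵥ* H = H *ᵥ x := by rw [← vecMul_transpose, hH.eq]
  have hsymm : x ⬝ᵥ H *ᵥ v = H *ᵥ x ⬝ᵥ v := by rw [dotProduct_mulVec, hvecMul]
  simp only [quadObjective, mulVec_add, dotProduct_add, add_dotProduct]
  linear_combination (1 / 2 : ℝ) * hsymm + (1 / 2 : ℝ) * dotProduct_comm v (H *ᵥ x)

theorem quadObjective_update [DecidableEq ι] (hH : H.IsSymm) (x : ι → ℝ) (i : ι) (a : ℝ) :
    quadObjective H c (Function.update x i a) =
      quadObjective H c x + (a - x i) * (H *ᵥ x + c) i + (a - x i) ^ 2 / 2 * H i i := by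
  rw [Function.update_eq_self_add_single, quadObjective_add hH, dotProduct_single, mulVec_single,
    single_dotProduct]
  simp only [Pi.smul_apply, col_apply, MulOpposite.smul_eq_mul_unop, MulOpposite.unop_op]
  ring

theorem IsMinOn.quadObjective_dotProduct_sub_nonneg (hH : H.IsSymm) {S : Set (ι → ℝ)}
    (hS : Convex ℝ S) {x y : ι → ℝ} (hmin : IsMinOn (quadObjective H c) S x) (hx : x ∈ S)
    (hy : y ∈ S) : 0 ≤ (H *ᵥ x + c) ⬝ᵥ (y - x) := by
  refine nonneg_of_forall_mul_add_sq_mul_nonneg (Q := 1 / 2 * ((y - x) ⬝ᵥ H *ᵥ (y - x))) ?_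
  intro t ht
  have hle := isMinOn_iff.mp hmin _ (hS.add_smul_sub_mem hx hy (Set.Ioc_subset_Icc_self ht))
  rw [quadObjective_add hH] at hle
  simp only [dotProduct_smul, mulVec_smul, smul_dotProduct, smul_eq_mul] at hle
  linarith

theorem dotProduct_update_sub [DecidableEq ι] (v x : ι → ℝ) (i : ι) (a : ℝ) :
    v ⬝ᵥ (Function.update x i a - x) = v i * (a - x i) := by
  rw [Function.update_eq_self_add_single, add_sub_cancel_left, dotProduct_single]

theorem IsMinOn.quadObjective_grad_apply_eq_zero [DecidableEq ι] (hH : H.IsSymm)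
    {l u x : ι → ℝ} (hmin : IsMinOn (quadObjective H c) (Set.Icc l u) x) (hx : x ∈ Set.Icc l u)
    {i : ι} (hi : x i ∈ Set.Ioo (l i) (u i)) : (H *ᵥ x + c) i = 0 := by
  have hdir (a : ℝ) (ha : a ∈ Set.Icc (l i) (u i)) : 0 ≤ (H *ᵥ x + c) i * (a - x i) := by
    rw [← dotProduct_update_sub]
    exact hmin.quadObjective_dotProduct_sub_nonneg hH (convex_Icc l u) hx
      (Function.update_mem_Icc hx ha)
  have hl := hdir (l i) ⟨le_rfl, (hi.1.trans hi.2).le⟩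
  have hu := hdir (u i) ⟨(hi.1.trans hi.2).le, le_rfl⟩
  nlinarith [hi.1, hi.2]

theorem mul_quadObjective_grad_apply_nonpos [DecidableEq ι] (hH : H.PosSemidef)
    {S T : Set (ι → ℝ)} (hS : Convex ℝ S) (hT : Convex ℝ T) {x y : ι → ℝ} {i : ι}
    (hx : IsMinOn (quadObjective H c) S x) (hy : IsMinOn (quadObjective H c) T y)
    (hxS : x ∈ S) (hyS : y ∈ S) (hyT : y ∈ T) (hxT : Function.update x i 0 ∈ T) :
    x i * (H *ᵥ y + c) i ≤ 0 := by
  have hsymm : H.IsSymm := isHermitian_iff_isSymm.mp hH.isHermitian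
  have hy_x := hy.quadObjective_dotProduct_sub_nonneg hsymm hT hyT hxT
  have hx_y := hx.quadObjective_dotProduct_sub_nonneg hsymm hS hxS hyS
  have hquad : 0 ≤ H *ᵥ (x - y) ⬝ᵥ (x - y) := by
    simpa [dotProduct_comm] using hH.dotProduct_mulVec_nonneg (x - y)
  have hsplit : Function.update x i 0 - y = (x - y) - Pi.single i (x i) := by
    rw [Function.update_eq_self_add_single, zero_sub, Pi.single_neg]; abel
  rw [hsplit, dotProduct_sub, dotProduct_single] at hy_x
  rw [← neg_sub, dotProduct_neg] at hx_y
  simp only [mulVec_sub, add_dotProduct, sub_dotProduct] at hquad hy_x hx_y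
  linarith

theorem neg_mul_le_quadObjective_grad_apply [DecidableEq ι] (hH : H.IsSymm)
    {S T : Set (ι → ℝ)} {x y : ι → ℝ} {i : ι}
    (hx : IsMinOn (quadObjective H c) S x) (hy : IsMinOn (quadObjective H c) T y)
    (hxT : Function.update x i 0 ∈ T) (hyS : Function.update y i (x i) ∈ S)
    (hgrad : (H *ᵥ x + c) i = 0) (hyi : y i = 0) (hpos : 0 < x i) :
    -(x i * H i i) ≤ (H *ᵥ y + c) i := by
  have hy_le := isMinOn_iff.mp hy _ hxT
  have hx_le := isMinOn_iff.mp hx _ hyS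
  rw [quadObjective_update hH, hgrad] at hy_le
  rw [quadObjective_update hH, hyi] at hx_le
  have hprod : 0 ≤ x i * ((H *ᵥ y + c) i + x i * H i i) := by nlinarith
  linarith [nonneg_of_mul_nonneg_right hprod hpos]

end

theorem stmt_12_general (m : ℕ) (H : Matrix (Fin m) (Fin m) ℝ) (hH : H.PosSemidef)
    (c : Fin m → ℝ) (i : Fin m) (C : ℝ)
    (f : (Fin m → ℝ) → ℝ)
    (hf : ∀ b, f b = (1/2) * (b ⬝ᵥ H.mulVec b) + c ⬝ᵥ b)
    (B : Set (Fin m → ℝ)) (hB : B = {α | ∀ j, 0 ≤ α j ∧ α j ≤ C})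
    (αstar : Fin m → ℝ) (hαstarB : αstar ∈ B)
    (hαstar : ∀ α ∈ B, f αstar ≤ f α)
    (hlo : 0 < αstar i) (hhi : αstar i < C)
    (αi : Fin m → ℝ) (hαiB : αi ∈ B) (hαi0 : αi i = 0)
    (hαimin : ∀ α ∈ B, α i = 0 → f αi ≤ f α) :
    ((H.mulVec αi + c) i)^2 ≤ (αstar i)^2 * (H i i)^2 ∧
    (∀ s : ℝ, (H.mulVec αi + c) i = s - 1 →
      (1 - s)^2 ≤ (αstar i)^2 * (H i i)^2 ∧ (s < 0 → 1 ≤ αstar i * H i i)) := by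
  have hsymm : H.IsSymm := isHermitian_iff_isSymm.mp hH.isHermitian
  obtain rfl : f = quadObjective H c := funext hf
  obtain rfl : B = Set.Icc 0 (fun _ => C) := by
    rw [hB]; ext α; simp [Pi.le_def, forall_and]
  set T := Set.Icc (0 : Fin m → ℝ) (fun _ => C) ∩ {α | α i = 0}
  have hT : Convex ℝ T :=
    (convex_Icc _ _).inter (convex_hyperplane (LinearMap.proj i : (Fin m → ℝ) →ₗ[ℝ] ℝ).isLinear 0)
  have hminB : IsMinOn (quadObjective H c) _ αstar := isMinOn_iff.mpr hαstar
  have hminT : IsMinOn (quadObjective H c) T αi := isMinOn_iff.mpr fun α hα => hαimin α hα.1 hα.2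
  have hstarT : Function.update αstar i 0 ∈ T :=
    ⟨Function.update_mem_Icc hαstarB ⟨le_rfl, (hlo.trans hhi).le⟩, Function.update_self ..⟩
  have hgrad : (H *ᵥ αstar + c) i = 0 :=
    hminB.quadObjective_grad_apply_eq_zero hsymm hαstarB ⟨hlo, hhi⟩
  have hupper : (H *ᵥ αi + c) i ≤ 0 := nonpos_of_mul_nonpos_right
    (mul_quadObjective_grad_apply_nonpos hH (convex_Icc _ _) hT hminB hminT hαstarB hαiB
      ⟨hαiB, hαi0⟩ hstarT) hlo
  have hlower : -(αstar i * H i i) ≤ (H *ᵥ αi + c) i :=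
    neg_mul_le_quadObjective_grad_apply hsymm hminB hminT hstarT
      (Function.update_mem_Icc hαiB ⟨hlo.le, hhi.le⟩) hgrad hαi0 hlo
  have hsq : ((H *ᵥ αi + c) i) ^ 2 ≤ (αstar i) ^ 2 * (H i i) ^ 2 := by
    rw [← mul_pow]; exact sq_le_sq' hlower (by linarith)
  refine ⟨hsq, fun s hs => ⟨?_, fun hneg => by linarith⟩⟩
  rwa [show 1 - s = -(s - 1) by ring, neg_sq, ← hs]

theorem stmt_12 (m : ℕ) (H : Matrix (Fin m) (Fin m) ℝ) (hH : H.PosSemidef)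
    (c : Fin m → ℝ) (i : Fin m) (hHii : 0 < H i i) (C : ℝ) (hC : 0 < C)
    (f : (Fin m → ℝ) → ℝ)
    (hf : ∀ b, f b = (1/2) * (b ⬝ᵥ H.mulVec b) + c ⬝ᵥ b)
    (B : Set (Fin m → ℝ)) (hB : B = {α | ∀ j, 0 ≤ α j ∧ α j ≤ C})
    (αstar : Fin m → ℝ) (hαstarB : αstar ∈ B)
    (hαstar : ∀ α ∈ B, f αstar ≤ f α)
    (hlo : 0 < αstar i) (hhi : αstar i < C)
    (αi : Fin m → ℝ) (hαiB : αi ∈ B) (hαi0 : αi i = 0)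
    (hαimin : ∀ α ∈ B, α i = 0 → f αi ≤ f α) :
    ((H.mulVec αi + c) i)^2 ≤ (αstar i)^2 * (H i i)^2 ∧
    (∀ s : ℝ, (H.mulVec αi + c) i = s - 1 →
      (1 - s)^2 ≤ (αstar i)^2 * (H i i)^2 ∧ (s < 0 → 1 ≤ αstar i * H i i)) :=
  stmt_12_general m H hH c i C f hf B hB αstar hαstarB hαstar hlo hhi αi hαiB hαi0 hαimin
end
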